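/- Let (A,C)_ψ be an entwining structure with C projective over k. Suppose there exists e ∈ C with C* ⇀ e = C (i.e. the map ξ ↦ ξ ⇀ e = e₍₁₎⟨e₍₂₎,ξ⟩ is surjective) and ψ(e ⊗ a) = a ⊗ e for all a ∈ A. Then C is a finitely generated k-module and the map φ : C* → C, φ(ξ) = ξ ⇀ e is an isomorphism of right C-comodules satisfying ψ∘(φ⊗A)∘ψ̄ = (A⊗φ) on A⊗C*. -/

import Mathlib

/-!
Writing `Δe = ∑ eᵢ ⊗ e'ᵢ`, every `ξ ⇀ e = ∑ ξ(e'ᵢ) eᵢ` lies in the span of the `eᵢ`, so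
surjectivity of `φ` makes `C` finitely generated. Then `φ` is a surjection `C* → C` between
modules with `C* ≅ C**`, so transposing gives an injection `C* → C` and Orzech's theorem makes
`φ` injective. Both identities are checked after contracting with an arbitrary functional on the
last `C`-factor, which is faithful since `C` is finitely generated projective: colinearity of `φ`
is coassociativity, and `ψ ∘ (φ ⊗ A) ∘ ψ̄ = A ⊗ φ` is the entwining condition
`(A ⊗ Δ)ψ = (ψ ⊗ C)(C ⊗ ψ)(Δ ⊗ A)` evaluated at `e ⊗ a`, where `ψ(e ⊗ a) = a ⊗ e`.
-/

open TensorProduct LinearMap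

noncomputable section

variable (k A C : Type*) [CommRing k] [Ring A] [Algebra k A]
  [AddCommGroup C] [Module k C] [Coalgebra k C]

/-- An entwining structure `(A,C)_ψ` over `k`. -/
structure Entwining where
  psi : C ⊗[k] A →ₗ[k] A ⊗[k] C
  mul_compat :
    psi ∘ₗ lTensor C (LinearMap.mul' k A)
      = rTensor C (LinearMap.mul' k A)
        ∘ₗ (TensorProduct.assoc k A A C).symm.toLinearMap
        ∘ₗ lTensor A psi
        ∘ₗ (TensorProduct.assoc k A C A).toLinearMap
        ∘ₗ rTensor A psi
        ∘ₗ (TensorProduct.assoc k C A A).symm.toLinearMap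
  one_compat : ∀ c : C, psi (c ⊗ₜ[k] (1 : A)) = (1 : A) ⊗ₜ[k] c
  comul_compat :
    lTensor A (Coalgebra.comul (R := k) (A := C)) ∘ₗ psi
      = (TensorProduct.assoc k A C C).toLinearMap
        ∘ₗ rTensor C psi
        ∘ₗ (TensorProduct.assoc k C A C).symm.toLinearMap
        ∘ₗ lTensor C psi
        ∘ₗ (TensorProduct.assoc k C C A).toLinearMap
        ∘ₗ rTensor A (Coalgebra.comul (R := k) (A := C))
  counit_compat : ∀ (c : C) (a : A),
    (TensorProduct.rid k A)
        ((lTensor A (Coalgebra.counit (R := k) (A := C))) (psi (c ⊗ₜ[k] a)))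
      = Coalgebra.counit (R := k) c • a

variable {k A C} in
/-- Evaluation of the first (dual) factor at `c`: `ξ ⊗ a ↦ ξ(c) • a`. -/
def evFst (c : C) : Module.Dual k C ⊗[k] A →ₗ[k] A :=
  TensorProduct.lift ((LinearMap.lsmul k A) ∘ₗ
    (LinearMap.applyₗ (R := k) c : (C →ₗ[k] k) →ₗ[k] k))

variable {k A C} in
/-- Evaluation of the second (coalgebra) factor against `ξ`: `a ⊗ c ↦ ξ(c) • a`. -/
def evSnd (ξ : Module.Dual k C) : A ⊗[k] C →ₗ[k] A :=
  (TensorProduct.rid k A).toLinearMap ∘ₗ lTensor A ξ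

variable {k A C} in
/-- `ψ̄ : A ⊗ C* → C* ⊗ A` is a factorisation map for the entwining `ψ`:
`⟨c^α, ξ⟩ a_α = ξ_i(c) a^i`. -/
def IsFactorisation (E : Entwining k A C)
    (ψbar : A ⊗[k] Module.Dual k C →ₗ[k] Module.Dual k C ⊗[k] A) : Prop :=
  ∀ (a : A) (ξ : Module.Dual k C) (c : C),
    evFst c (ψbar (a ⊗ₜ[k] ξ)) = evSnd ξ (E.psi (c ⊗ₜ[k] a))

/-- The product of `B = C^{*op}`, i.e. the opposite convolution product:
`⟨c, b b'⟩ = ⟨c₍₂₎, b⟩ ⟨c₍₁₎, b'⟩`, as a linear map `B ⊗ B →ₗ B`. -/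
def opConv : Module.Dual k C ⊗[k] Module.Dual k C →ₗ[k] Module.Dual k C :=
  ((LinearMap.llcomp k C (C ⊗[k] C) k).flip (Coalgebra.comul (R := k) (A := C)))
  ∘ₗ (LinearMap.llcomp k (C ⊗[k] C) (k ⊗[k] k) k (LinearMap.mul' k k))
  ∘ₗ TensorProduct.homTensorHomMap (RingHom.id k) C C k k
  ∘ₗ (TensorProduct.comm k (Module.Dual k C) (Module.Dual k C)).toLinearMap

variable {k A C} in
/-- The multiplication of the smash product `B #_ψ̄ A` on `B ⊗ A`, `B = C^{*op}`:
`(b ⊗ a)(b' ⊗ a') = b ψ̄(a ⊗ b') a'`. -/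
def smashMul (ψbar : A ⊗[k] Module.Dual k C →ₗ[k] Module.Dual k C ⊗[k] A) :
    (Module.Dual k C ⊗[k] A) ⊗[k] (Module.Dual k C ⊗[k] A) →ₗ[k]
      Module.Dual k C ⊗[k] A :=
  rTensor A (opConv k C)
  ∘ₗ (TensorProduct.assoc k (Module.Dual k C) (Module.Dual k C) A).symm.toLinearMap
  ∘ₗ lTensor (Module.Dual k C) (lTensor (Module.Dual k C) (LinearMap.mul' k A))
  ∘ₗ lTensor (Module.Dual k C) (TensorProduct.assoc k (Module.Dual k C) A A).toLinearMap
  ∘ₗ lTensor (Module.Dual k C) (rTensor A ψbar)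
  ∘ₗ lTensor (Module.Dual k C) (TensorProduct.assoc k A (Module.Dual k C) A).symm.toLinearMap
  ∘ₗ (TensorProduct.assoc k (Module.Dual k C) A (Module.Dual k C ⊗[k] A)).toLinearMap

/-- The unit `ε ⊗ 1_A` of the smash product. -/
def smashOne : Module.Dual k C ⊗[k] A :=
  (Coalgebra.counit (R := k) (A := C)) ⊗ₜ[k] (1 : A)

variable {k C} in
/-- `φ_e : C* → C`, `ξ ↦ ξ ⇀ e = e₍₁₎ ⟨e₍₂₎, ξ⟩`. -/
def phiMap (e : C) : Module.Dual k C →ₗ[k] C :=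
  (((LinearMap.llcomp k (C ⊗[k] C) (C ⊗[k] k) C
      (TensorProduct.rid k C).toLinearMap)
    ∘ₗ (LinearMap.lTensorHom C)).flip) (Coalgebra.comul (R := k) e)

variable {k C} in
/-- `ξ ↦ e ↼ ξ = ⟨e₍₁₎, ξ⟩ e₍₂₎`. -/
def rarrowMap (e : C) : Module.Dual k C →ₗ[k] C :=
  (((LinearMap.llcomp k (C ⊗[k] C) (k ⊗[k] C) C
      (TensorProduct.lid k C).toLinearMap)
    ∘ₗ (LinearMap.rTensorHom C)).flip) (Coalgebra.comul (R := k) e)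

variable {k C} in
/-- The (standard) convolution product on `C*`: `(ξ ξ')(c) = ξ(c₍₁₎) ξ'(c₍₂₎)`. -/
def conv (ξ ξ' : Module.Dual k C) : Module.Dual k C :=
  (LinearMap.mul' k k) ∘ₗ TensorProduct.map ξ ξ' ∘ₗ Coalgebra.comul (R := k)

variable {k C} in
/-- `coactD` is the right `C`-coaction on `C*` determined by
`ξ₍₀₎ ⟨ξ₍₁₎, ξ'⟩ = ξ' ξ`. -/
def IsDualCoaction (coactD : Module.Dual k C →ₗ[k] Module.Dual k C ⊗[k] C) :
    Prop :=
  ∀ ξ ξ' : Module.Dual k C,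
    (TensorProduct.rid k (Module.Dual k C))
        ((lTensor (Module.Dual k C) ξ') (coactD ξ))
      = conv ξ' ξ

section Contraction

variable {k : Type*} [CommRing k] {M N P : Type*} [AddCommGroup M] [Module k M]
  [AddCommGroup N] [Module k N] [AddCommGroup P] [Module k P]

/-- On `A ⊗ C` this is `evSnd ξ`. -/
def rightContract (ξ : Module.Dual k P) : M ⊗[k] P →ₗ[k] M :=
  (TensorProduct.rid k M).toLinearMap ∘ₗ lTensor M ξ

@[simp]
lemma rightContract_tmul (ξ : Module.Dual k P) (m : M) (p : P) :
    rightContract ξ (m ⊗ₜ[k] p) = ξ p • m := by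
  simp [rightContract]

lemma rightContract_rTensor (ξ : Module.Dual k P) (g : M →ₗ[k] N) (x : M ⊗[k] P) :
    rightContract ξ (rTensor P g x) = g (rightContract ξ x) :=
  LinearMap.congr_fun (TensorProduct.ext' fun m p => by simp :
    rightContract ξ ∘ₗ rTensor P g = g ∘ₗ rightContract ξ) x

lemma rightContract_lTensor (ξ : Module.Dual k P) (g : N →ₗ[k] P) (x : M ⊗[k] N) :
    rightContract ξ (lTensor M g x) = rightContract (ξ ∘ₗ g) x :=
  LinearMap.congr_fun (TensorProduct.ext' fun m n => by simp :
    rightContract ξ ∘ₗ lTensor M g = rightContract (ξ ∘ₗ g)) x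

lemma lTensor_rightContract_assoc (ξ : Module.Dual k P) (x : (M ⊗[k] N) ⊗[k] P) :
    lTensor M (rightContract ξ) (TensorProduct.assoc k M N P x) = rightContract ξ x :=
  LinearMap.congr_fun (TensorProduct.ext_threefold fun m n p => by simp [TensorProduct.tmul_smul] :
    lTensor M (rightContract ξ) ∘ₗ (TensorProduct.assoc k M N P).toLinearMap
      = rightContract ξ) x

lemma rightContract_assoc_symm (ξ : Module.Dual k P) (x : M ⊗[k] (N ⊗[k] P)) :
    rightContract ξ ((TensorProduct.assoc k M N P).symm x) = lTensor M (rightContract ξ) x := by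
  rw [← lTensor_rightContract_assoc, LinearEquiv.apply_symm_apply]

/-- `M ⊗ P ≅ P** ⊗ M ≅ Hom(P*, M)` for `P` finitely generated projective. -/
lemma TensorProduct.ext_rightContract [Module.Finite k P] [Module.Projective k P]
    {t t' : M ⊗[k] P} (h : ∀ ξ : Module.Dual k P, rightContract ξ t = rightContract ξ t') :
    t = t' := by
  let toHom : M ⊗[k] P →ₗ[k] Module.Dual k P →ₗ[k] M :=
    dualTensorHom k (Module.Dual k P) M ∘ₗ (Module.evalEquiv k P).toLinearMap.rTensor M
      ∘ₗ (TensorProduct.comm k M P).toLinearMap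
  have toHom_apply : ∀ u ξ, toHom u ξ = rightContract ξ u := by
    intro u ξ
    induction u using TensorProduct.induction_on with
    | zero => simp
    | tmul m p => simp [toHom, dualTensorHom_apply]
    | add u u' hu hu' => simp only [map_add, LinearMap.add_apply, hu, hu']
  have toHom_injective : Function.Injective toHom :=
    (dualTensorHom_bijective.1.comp ((Module.evalEquiv k P).rTensor M).injective).comp
      (TensorProduct.comm k M P).injective
  exact toHom_injective (LinearMap.ext fun ξ => by simp only [toHom_apply, h])

end Contraction

section Frobenius

variable {k A C}

lemma phiMap_apply (c : C) (ξ : Module.Dual k C) :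
    phiMap c ξ = rightContract ξ (Coalgebra.comul (R := k) c) := rfl

lemma phiMap_apply_eq_sum {ι : Type*} {c : C} (𝓡 : Coalgebra.Repr k c ι)
    (ξ : Module.Dual k C) : phiMap c ξ = ∑ i ∈ 𝓡.index, ξ (𝓡.right i) • 𝓡.left i := by
  simp [phiMap_apply, ← 𝓡.eq, map_sum]

lemma range_phiMap_le_span {ι : Type*} {c : C} (𝓡 : Coalgebra.Repr k c ι) :
    LinearMap.range (phiMap c) ≤ Submodule.span k (𝓡.left '' 𝓡.index) := by
  rintro _ ⟨ξ, rfl⟩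
  rw [phiMap_apply_eq_sum 𝓡]
  exact Submodule.sum_mem _ fun i hi =>
    Submodule.smul_mem _ _ (Submodule.subset_span (Set.mem_image_of_mem _ hi))

lemma Module.Finite.of_surjective_phiMap {c : C} (h : Function.Surjective (phiMap (k := k) c)) :
    Module.Finite k C := by
  classical
  refine ⟨⟨(Coalgebra.Repr.arbitrary k c).index.image Prod.fst, top_le_iff.1 ?_⟩⟩
  rw [← LinearMap.range_eq_top.2 h, Finset.coe_image]
  exact range_phiMap_le_span _

/-- The transpose gives an injection `M* → M** ≅ M`, and by Orzech's theorem a surjection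
onto a finitely generated module that also receives an injection is injective. -/
lemma LinearMap.injective_of_surjective_dual {M : Type*} [AddCommGroup M] [Module k M]
    [Module.Finite k M] [Module.IsReflexive k M] {f : Module.Dual k M →ₗ[k] M}
    (hf : Function.Surjective f) : Function.Injective f :=
  OrzechProperty.injective_of_surjective_of_injective
    ((Module.evalEquiv k M).symm.toLinearMap ∘ₗ f.dualMap) f
    ((Module.evalEquiv k M).symm.injective.comp (LinearMap.dualMap_injective_of_surjective hf))
    hf

lemma conv_eq_comp (ξ' ξ : Module.Dual k C) :
    conv ξ' ξ = ξ' ∘ₗ rightContract ξ ∘ₗ Coalgebra.comul (R := k) := by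
  have : LinearMap.mul' k k ∘ₗ TensorProduct.map ξ' ξ = ξ' ∘ₗ rightContract (M := C) ξ :=
    TensorProduct.ext' fun x y => by simp [mul_comm]
  rw [conv, ← LinearMap.comp_assoc, this, LinearMap.comp_assoc]

lemma rightContract_comul_phiMap (c : C) (ξ' ξ : Module.Dual k C) :
    rightContract ξ' (Coalgebra.comul (R := k) (phiMap c ξ)) = phiMap c (conv ξ' ξ) := by
  rw [phiMap_apply, ← rightContract_rTensor, ← Coalgebra.coassoc_symm_apply,
    rightContract_assoc_symm, ← LinearMap.lTensor_comp_apply, rightContract_lTensor,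
    phiMap_apply, conv_eq_comp]

lemma comul_comp_phiMap [Module.Finite k C] [Module.Projective k C] (c : C)
    {coactD : Module.Dual k C →ₗ[k] Module.Dual k C ⊗[k] C} (hcoact : IsDualCoaction coactD) :
    Coalgebra.comul (R := k) ∘ₗ phiMap c = rTensor C (phiMap c) ∘ₗ coactD := by
  refine LinearMap.ext fun ξ => TensorProduct.ext_rightContract fun ξ' => ?_
  rw [LinearMap.comp_apply, LinearMap.comp_apply, rightContract_comul_phiMap,
    rightContract_rTensor, ← hcoact ξ ξ']
  rfl

lemma rTensor_phiMap_apply_eq_sum {ι : Type*} {c : C} (𝓡 : Coalgebra.Repr k c ι)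
    (t : Module.Dual k C ⊗[k] A) :
    rTensor A (phiMap c) t = ∑ i ∈ 𝓡.index, 𝓡.left i ⊗ₜ[k] evFst (𝓡.right i) t := by
  induction t using TensorProduct.induction_on with
  | zero => simp
  | tmul ζ a =>
    simp [phiMap_apply_eq_sum 𝓡, evFst, TensorProduct.sum_tmul, TensorProduct.smul_tmul]
  | add t t' ht ht' => simp only [map_add, ht, ht', TensorProduct.tmul_add, Finset.sum_add_distrib]

def Entwining.slice (E : Entwining k A C) (a : A) (ξ : Module.Dual k C) : C →ₗ[k] A :=
  evSnd ξ ∘ₗ E.psi ∘ₗ (TensorProduct.mk k C A).flip a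

lemma IsFactorisation.rTensor_phiMap {E : Entwining k A C}
    {ψbar : A ⊗[k] Module.Dual k C →ₗ[k] Module.Dual k C ⊗[k] A} (hψbar : IsFactorisation E ψbar)
    (c : C) (a : A) (ξ : Module.Dual k C) :
    rTensor A (phiMap c) (ψbar (a ⊗ₜ[k] ξ))
      = lTensor C (E.slice a ξ) (Coalgebra.comul (R := k) c) := by
  let 𝓡 := Coalgebra.Repr.arbitrary k c
  simp [rTensor_phiMap_apply_eq_sum 𝓡, ← 𝓡.eq, map_sum, hψbar a ξ, Entwining.slice]

/-- Contracting the entwining condition `(A ⊗ Δ) ψ = (ψ ⊗ C)(C ⊗ ψ)(Δ ⊗ A)` with `ξ`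
in the last factor. -/
lemma Entwining.lTensor_rightContract_comul_psi (E : Entwining k A C) (c : C) (a : A)
    (ξ : Module.Dual k C) :
    lTensor A (rightContract ξ ∘ₗ Coalgebra.comul (R := k)) (E.psi (c ⊗ₜ[k] a))
      = E.psi (lTensor C (E.slice a ξ) (Coalgebra.comul (R := k) c)) := by
  have hassoc : TensorProduct.assoc k C C A (Coalgebra.comul (R := k) c ⊗ₜ[k] a)
      = lTensor C ((TensorProduct.mk k C A).flip a) (Coalgebra.comul (R := k) c) := by
    simp [← (Coalgebra.Repr.arbitrary k c).eq, TensorProduct.sum_tmul, map_sum]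
  have hcompat := LinearMap.congr_fun E.comul_compat (c ⊗ₜ[k] a)
  simp only [LinearMap.comp_apply, LinearEquiv.coe_coe, rTensor_tmul, hassoc] at hcompat
  rw [LinearMap.lTensor_comp_apply, hcompat, lTensor_rightContract_assoc, rightContract_rTensor,
    rightContract_assoc_symm, ← LinearMap.lTensor_comp_apply, ← LinearMap.lTensor_comp_apply]
  rfl

end Frobenius

theorem frobenius_element_gives_comodule_iso
    [Module.Projective k C] (E : Entwining k A C) (e : C)
    (hsurj : Function.Surjective (phiMap (k := k) e))
    (hcent : ∀ a : A, E.psi (e ⊗ₜ[k] a) = a ⊗ₜ[k] e) :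
    Module.Finite k C ∧
    Function.Bijective (phiMap (k := k) e) ∧
    -- `φ` is a right `C`-comodule map:
    (∀ coactD : Module.Dual k C →ₗ[k] Module.Dual k C ⊗[k] C,
      IsDualCoaction coactD →
        (Coalgebra.comul (R := k) (A := C)) ∘ₗ phiMap (k := k) e
          = rTensor C (phiMap (k := k) e) ∘ₗ coactD) ∧
    -- the compatibility `ψ ∘ (φ ⊗ A) ∘ ψ̄ = A ⊗ φ`:
    (∀ ψbar : A ⊗[k] Module.Dual k C →ₗ[k] Module.Dual k C ⊗[k] A,
      IsFactorisation E ψbar →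
        E.psi ∘ₗ rTensor A (phiMap (k := k) e) ∘ₗ ψbar
          = lTensor A (phiMap (k := k) e)) := by
  have hfin := Module.Finite.of_surjective_phiMap hsurj
  refine ⟨hfin, ⟨LinearMap.injective_of_surjective_dual hsurj, hsurj⟩,
    fun _ hcoact => comul_comp_phiMap e hcoact, fun ψbar hψbar => ?_⟩
  refine TensorProduct.ext' fun a ξ => ?_
  rw [LinearMap.comp_apply, LinearMap.comp_apply, hψbar.rTensor_phiMap,
    ← E.lTensor_rightContract_comul_psi, hcent, lTensor_tmul, lTensor_tmul]
  rfl
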